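/- Let M be a compact metric space with Borel probability measure m and f : M → M Borel measurable. Then the minimal 1-observable statistical attractor is unique: if K₁ and K₂ are both nonempty compact f-invariant sets with m(B(K₁)) = m(B(K₂)) = 1 and neither contains a proper nonempty compact f-invariant subset whose basin has full measure, then K₁ = K₂. -/

import Mathlib

open MeasureTheory Filter Metric Set
open scoped Classical ENNReal Topology

/-- Frequency of visits, up to time `n - 1`, of the orbit of `x` to the
`ε`-neighborhood of `K`: `(1/n) · #{0 ≤ j ≤ n−1 : dist(f^j(x), K) < ε}`. -/
noncomputable def visitFreq {M : Type*} [MetricSpace M] (f : M → M) (K : Set M) (ε : ℝ)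
    (x : M) (n : ℕ) : ℝ :=
  (((Finset.range n).filter (fun j => infDist (f^[j] x) K < ε)).card : ℝ) / n

/-- Basin of statistical attraction of `K`. -/
def statBasin {M : Type*} [MetricSpace M] (f : M → M) (K : Set M) : Set M :=
  {x | ∀ ε > 0, Tendsto (fun n => visitFreq f K ε x n) atTop (𝓝 1)}

/-- The auxiliary basin `B_ε(K) = {x : liminf_n (1/n)·#{j < n : dist(f^j(x),K) < ε} > 1 − ε}`. -/
def statBasinEps {M : Type*} [MetricSpace M] (f : M → M) (K : Set M) (ε : ℝ) : Set M :=
  {x | 1 - ε < atTop.liminf (fun n => visitFreq f K ε x n)}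

/-!
If `K₁` and `K₂` both have full-measure basins, then `K₁ ∩ K₂` is a compact invariant set whose
basin contains `B(K₁) ∩ B(K₂)` and so has full measure; minimality then forces
`K₁ = K₁ ∩ K₂ = K₂`. The basin inclusion rests on compactness of `K₁`: points `δ`-close to both
`K₁` and `K₂` are `ε`-close to `K₁ ∩ K₂`, so the frequency of `ε`-visits to `K₁ ∩ K₂` is at least
the sum of the two frequencies of `δ`-visits minus `1`. Applied to a point of both basins, the
same count produces iterates close to both sets, whence `K₁ ∩ K₂ ≠ ∅`.
-/

theorem Finset.card_filter_add_card_filter_le {ι : Type*} (s : Finset ι) (p q : ι → Prop)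
    [DecidablePred p] [DecidablePred q] :
    (s.filter p).card + (s.filter q).card ≤ (s.filter fun i => p i ∧ q i).card + s.card := by
  rw [Finset.filter_and, ← Finset.card_union_add_card_inter, add_comm]
  gcongr
  exact Finset.union_subset (Finset.filter_subset _ _) (Finset.filter_subset _ _)

namespace Metric

variable {X : Type*} [PseudoMetricSpace X] {A B : Set X} {ε : ℝ}

theorem exists_thickening_inter_thickening_subset (hA : IsCompact A) (hB : IsClosed B)
    (hε : 0 < ε) : ∃ δ > 0, thickening δ A ∩ thickening δ B ⊆ thickening ε (A ∩ B) := by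
  set U := thickening (ε / 2) (A ∩ B)
  have hdisj : Disjoint (A \ U) B := disjoint_left.2 fun a ha haB =>
    ha.2 (self_subset_thickening (half_pos hε) _ ⟨ha.1, haB⟩)
  obtain ⟨δ₀, hδ₀, hδ₀disj⟩ := hdisj.exists_thickenings (hA.diff isOpen_thickening) hB
  set δ := min δ₀ (ε / 2)
  have hδdisj : Disjoint (thickening δ (A \ U)) (thickening δ B) :=
    hδ₀disj.mono (thickening_mono (min_le_left _ _) _) (thickening_mono (min_le_left _ _) _)
  refine ⟨δ, lt_min hδ₀ (half_pos hε), ?_⟩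
  calc thickening δ A ∩ thickening δ B
      ⊆ (thickening δ (A \ U) ∪ thickening δ U) ∩ thickening δ B := by
        rw [← thickening_union, sdiff_union_self]
        gcongr
        exact thickening_subset_of_subset _ subset_union_left
    _ ⊆ thickening δ U := fun y ⟨hy, hyB⟩ =>
        hy.resolve_left fun hyAU => disjoint_left.1 hδdisj hyAU hyB
    _ ⊆ thickening (δ + ε / 2) (A ∩ B) := thickening_thickening_subset _ _ _
    _ ⊆ thickening ε (A ∩ B) := thickening_mono (by linarith [min_le_right δ₀ (ε / 2)]) _

theorem exists_pos_forall_exists_mem_inter_dist_lt (hA : IsCompact A) (hB : IsClosed B)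
    (hAne : A.Nonempty) (hBne : B.Nonempty) (hε : 0 < ε) :
    ∃ δ > 0, ∀ y, infDist y A < δ → infDist y B < δ → ∃ z ∈ A ∩ B, dist y z < ε := by
  obtain ⟨δ, hδ, hsub⟩ := exists_thickening_inter_thickening_subset hA hB hε
  refine ⟨δ, hδ, fun y hyA hyB => mem_thickening_iff.1 (hsub ⟨?_, ?_⟩)⟩
  · exact (mem_thickening_iff_infDist_lt hAne).2 hyA
  · exact (mem_thickening_iff_infDist_lt hBne).2 hyB

end Metric

section visitFreq

variable {M : Type*} [MetricSpace M] (f : M → M)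

theorem visitFreq_le_one (K : Set M) (ε : ℝ) (x : M) (n : ℕ) : visitFreq f K ε x n ≤ 1 := by
  rcases Nat.eq_zero_or_pos n with rfl | hn
  · simp [visitFreq]
  · rw [visitFreq, div_le_one (by exact_mod_cast hn)]
    exact_mod_cast (Finset.card_filter_le _ _).trans_eq (Finset.card_range n)

theorem visitFreq_mono (K : Set M) {ε ε' : ℝ} (h : ε ≤ ε') (x : M) (n : ℕ) :
    visitFreq f K ε x n ≤ visitFreq f K ε' x n := by
  refine div_le_div_of_nonneg_right ?_ n.cast_nonneg
  exact_mod_cast Finset.card_le_card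
    (Finset.monotone_filter_right _ fun _ _ (hj : _ < ε) => hj.trans_le h)

theorem visitFreq_add_visitFreq_le (A B : Set M) (δ : ℝ) (x : M) (n : ℕ) :
    visitFreq f A δ x n + visitFreq f B δ x n ≤
      ((Finset.range n).filter fun j => infDist (f^[j] x) A < δ ∧ infDist (f^[j] x) B < δ).card
        / n + 1 := by
  rcases Nat.eq_zero_or_pos n with rfl | hn
  · simp [visitFreq]
  · have hn' : (0 : ℝ) < n := by exact_mod_cast hn
    rw [visitFreq, visitFreq, ← add_div, div_add_one hn'.ne', div_le_div_iff_of_pos_right hn']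
    exact_mod_cast (Finset.card_filter_add_card_filter_le _ _ _).trans_eq
      (by rw [Finset.card_range])

theorem tendsto_visitFreq_of_le {K : Set M} {ε ε' : ℝ} (h : ε ≤ ε') {x : M}
    (hε : Tendsto (fun n => visitFreq f K ε x n) atTop (𝓝 1)) :
    Tendsto (fun n => visitFreq f K ε' x n) atTop (𝓝 1) :=
  tendsto_of_tendsto_of_tendsto_of_le_of_le hε tendsto_const_nhds
    (visitFreq_mono f K h x) (visitFreq_le_one f K ε' x)

variable {f} {A B : Set M} {x : M}

theorem exists_iterate_infDist_lt_of_mem_statBasin (hxA : x ∈ statBasin f A)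
    (hxB : x ∈ statBasin f B) {δ : ℝ} (hδ : 0 < δ) :
    ∃ j, infDist (f^[j] x) A < δ ∧ infDist (f^[j] x) B < δ := by
  obtain ⟨n, hn⟩ := (((hxA δ hδ).add (hxB δ hδ)).eventually
    (lt_mem_nhds (by norm_num : (1 : ℝ) < 1 + 1))).exists
  have hle := visitFreq_add_visitFreq_le f A B δ x n
  obtain ⟨j, hj⟩ := Finset.card_pos.1 <| Nat.pos_of_ne_zero fun h0 => by
    rw [h0, Nat.cast_zero, zero_div, zero_add] at hle
    linarith
  exact ⟨j, (Finset.mem_filter.1 hj).2⟩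

theorem inter_nonempty_of_mem_statBasin (hA : IsCompact A) (hB : IsClosed B)
    (hAne : A.Nonempty) (hBne : B.Nonempty) (hxA : x ∈ statBasin f A)
    (hxB : x ∈ statBasin f B) : (A ∩ B).Nonempty := by
  obtain ⟨δ, hδ, hnear⟩ := exists_pos_forall_exists_mem_inter_dist_lt hA hB hAne hBne one_pos
  obtain ⟨j, hjA, hjB⟩ := exists_iterate_infDist_lt_of_mem_statBasin hxA hxB hδ
  obtain ⟨z, hz, -⟩ := hnear _ hjA hjB
  exact ⟨z, hz⟩

theorem statBasin_inter_subset (hA : IsCompact A) (hB : IsClosed B)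
    (hAne : A.Nonempty) (hBne : B.Nonempty) :
    statBasin f A ∩ statBasin f B ⊆ statBasin f (A ∩ B) := by
  rintro x ⟨hxA, hxB⟩ ε hε
  obtain ⟨δ, hδ, hnear⟩ := exists_pos_forall_exists_mem_inter_dist_lt hA hB hAne hBne hε
  have hlow : Tendsto (fun n => visitFreq f A δ x n + visitFreq f B δ x n - 1) atTop (𝓝 1) := by
    simpa using ((hxA δ hδ).add (hxB δ hδ)).sub_const 1
  refine tendsto_of_tendsto_of_tendsto_of_le_of_le hlow tendsto_const_nhds (fun n => ?_)
    (visitFreq_le_one f _ ε x)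
  have hboth : ((Finset.range n).filter fun j =>
      infDist (f^[j] x) A < δ ∧ infDist (f^[j] x) B < δ).card ≤
      ((Finset.range n).filter fun j => infDist (f^[j] x) (A ∩ B) < ε).card := by
    refine Finset.card_le_card (Finset.monotone_filter_right _ fun j _ ⟨hjA, hjB⟩ => ?_)
    obtain ⟨z, hz, hjz⟩ := hnear _ hjA hjB
    exact (infDist_le_dist_of_mem hz).trans_lt hjz
  have hfreq : (((Finset.range n).filter fun j =>
      infDist (f^[j] x) A < δ ∧ infDist (f^[j] x) B < δ).card : ℝ) / n ≤
      visitFreq f (A ∩ B) ε x n :=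
    div_le_div_of_nonneg_right (by exact_mod_cast hboth) n.cast_nonneg
  linarith [visitFreq_add_visitFreq_le f A B δ x n, hfreq]

theorem statBasin_eq_iInter (K : Set M) :
    statBasin f K =
      ⋂ k : ℕ, {x | Tendsto (fun n => visitFreq f K (1 / (k + 1)) x n) atTop (𝓝 1)} := by
  ext x
  simp only [statBasin, mem_ofPred_eq, mem_iInter]
  refine ⟨fun h k => h _ Nat.one_div_pos_of_nat, fun h ε hε => ?_⟩
  obtain ⟨k, hk⟩ := exists_nat_one_div_lt hε
  exact tendsto_visitFreq_of_le f hk.le (h k)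

variable [MeasurableSpace M] [OpensMeasurableSpace M]

theorem measurable_visitFreq (hf : Measurable f) (K : Set M) (ε : ℝ) (n : ℕ) :
    Measurable fun x => visitFreq f K ε x n := by
  simp only [visitFreq, Finset.card_filter, Nat.cast_sum, Nat.cast_ite, Nat.cast_one,
    Nat.cast_zero]
  refine (Finset.measurable_sum _ fun j _ =>
    Measurable.ite ?_ measurable_const measurable_const).div_const _
  exact measurableSet_lt ((continuous_infDist_pt K).measurable.comp (hf.iterate j)) measurable_const

theorem measurableSet_statBasin (hf : Measurable f) (K : Set M) :
    MeasurableSet (statBasin f K) := by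
  rw [statBasin_eq_iInter]
  exact .iInter fun k => measurableSet_tendsto _ fun n => measurable_visitFreq hf K _ n

end visitFreq

theorem minimal_one_obs_statAttractor_unique_general {M : Type*} [MetricSpace M]
    [MeasurableSpace M] [BorelSpace M] (m : Measure M) [IsProbabilityMeasure m]
    (f : M → M) (hf : Measurable f) (K₁ K₂ : Set M)
    (h₁ne : K₁.Nonempty) (h₂ne : K₂.Nonempty) (h₁c : IsCompact K₁) (h₂c : IsCompact K₂)
    (h₁inv : f ⁻¹' K₁ = K₁) (h₂inv : f ⁻¹' K₂ = K₂)
    (h₁b : m (statBasin f K₁) = 1) (h₂b : m (statBasin f K₂) = 1)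
    (h₁min : ∀ K' : Set M, K' ⊆ K₁ → K' ≠ K₁ → K'.Nonempty → IsCompact K' →
      f ⁻¹' K' = K' → m (statBasin f K') ≠ 1)
    (h₂min : ∀ K' : Set M, K' ⊆ K₂ → K' ≠ K₂ → K'.Nonempty → IsCompact K' →
      f ⁻¹' K' = K' → m (statBasin f K') ≠ 1) :
    K₁ = K₂ := by
  have hae : statBasin f K₁ ∩ statBasin f K₂ ∈ ae m :=
    inter_mem ((mem_ae_iff_prob_eq_one (measurableSet_statBasin hf K₁)).2 h₁b)
      ((mem_ae_iff_prob_eq_one (measurableSet_statBasin hf K₂)).2 h₂b)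
  obtain ⟨x, hx₁, hx₂⟩ := Filter.nonempty_of_mem hae
  have hne : (K₁ ∩ K₂).Nonempty :=
    inter_nonempty_of_mem_statBasin h₁c h₂c.isClosed h₁ne h₂ne hx₁ hx₂
  have hc : IsCompact (K₁ ∩ K₂) := h₁c.inter_right h₂c.isClosed
  have hinv : f ⁻¹' (K₁ ∩ K₂) = K₁ ∩ K₂ := by rw [preimage_inter, h₁inv, h₂inv]
  have hb : m (statBasin f (K₁ ∩ K₂)) = 1 :=
    (mem_ae_iff_prob_eq_one (measurableSet_statBasin hf _)).1 <|
      mem_of_superset hae (statBasin_inter_subset h₁c h₂c.isClosed h₁ne h₂ne)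
  have e₁ : K₁ ∩ K₂ = K₁ := by_contra fun h => h₁min _ inter_subset_left h hne hc hinv hb
  have e₂ : K₁ ∩ K₂ = K₂ := by_contra fun h => h₂min _ inter_subset_right h hne hc hinv hb
  exact e₁.symm.trans e₂

/-- uniqueness of the minimal `1`-observable statistical attractor. -/
theorem minimal_one_obs_statAttractor_unique {M : Type*} [MetricSpace M] [CompactSpace M]
    [MeasurableSpace M] [BorelSpace M] (m : Measure M) [IsProbabilityMeasure m]
    (f : M → M) (hf : Measurable f) (K₁ K₂ : Set M)
    (h₁ne : K₁.Nonempty) (h₂ne : K₂.Nonempty) (h₁c : IsCompact K₁) (h₂c : IsCompact K₂)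
    (h₁inv : f ⁻¹' K₁ = K₁) (h₂inv : f ⁻¹' K₂ = K₂)
    (h₁b : m (statBasin f K₁) = 1) (h₂b : m (statBasin f K₂) = 1)
    (h₁min : ∀ K' : Set M, K' ⊆ K₁ → K' ≠ K₁ → K'.Nonempty → IsCompact K' →
      f ⁻¹' K' = K' → m (statBasin f K') ≠ 1)
    (h₂min : ∀ K' : Set M, K' ⊆ K₂ → K' ≠ K₂ → K'.Nonempty → IsCompact K' →
      f ⁻¹' K' = K' → m (statBasin f K') ≠ 1) :
    K₁ = K₂ :=
  minimal_one_obs_statAttractor_unique_general m f hf K₁ K₂ h₁ne h₂ne h₁c h₂c h₁inv h₂inv h₁b h₂b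
    h₁min h₂min
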